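/- Consider the norm ‖(x,y)‖₁ = |x| + |y| on ℝ² and the Borel set A = {0} × [0,1], which has Hausdorff dimension 1. For every t ∈ (π/4, 3π/4), the closest-point projection with respect to ‖·‖₁ of A onto the line H_{v(t)}, where v(t) = (cos t, sin t), is the singleton {(0,0)}, and hence has Hausdorff dimension 0. Consequently, the set of directions v ∈ S¹ for which dim(P_v(A)) < dim A has positive ℋ¹-measure; in particular, the Marstrand-type conclusion that dim(P_v(A)) = dim A for ℋ¹-almost every v ∈ S¹ fails for the norm ‖·‖₁. -/

import Mathlib

/-!
On a line `a q₀ + b q₁ = 0` with `|a| < |b|`, every point `p ≠ 0` has `|p₁| < |p₀|`. Going from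
a point `x` of the vertical axis to `p` therefore costs `|p₀|` horizontally but saves at most
`|p₁|` vertically, so `0` is the unique `ℓ¹`-nearest point of the line to `x`. For
`t ∈ (π/4, 3π/4)` the normal `(cos t, sin t)` satisfies `|cos t| < sin t`, so the projection
collapses the whole segment `{0} × [0,1]` onto the origin, for an arc of directions of positive
length.
-/

open Set Metric Real MeasureTheory
open scoped ENNReal RealInnerProductSpace

noncomputable section

/-- The point `(a, b)` of the Euclidean plane. -/
def mk2 (a b : ℝ) : EuclideanSpace ℝ (Fin 2) :=
  (WithLp.equiv 2 (Fin 2 → ℝ)).symm ![a, b]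

/-- The 1-norm `‖(x,y)‖₁ = |x| + |y|` on the plane. -/
def oneNorm (x : EuclideanSpace ℝ (Fin 2)) : ℝ :=
  |x 0| + |x 1|

/-- The vertical segment `A = {0} × [0,1]`. -/
def vertSegment : Set (EuclideanSpace ℝ (Fin 2)) :=
  {x : EuclideanSpace ℝ (Fin 2) | x 0 = 0 ∧ x 1 ∈ Icc (0 : ℝ) 1}

local notation "E²" => EuclideanSpace ℝ (Fin 2)

@[simp] lemma mk2_apply_zero (a b : ℝ) : mk2 a b 0 = a := rfl

@[simp] lemma mk2_apply_one (a b : ℝ) : mk2 a b 1 = b := rfl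

lemma inner_mk2 (a b : ℝ) (q : E²) : ⟪mk2 a b, q⟫ = a * q 0 + b * q 1 := by
  simp [PiLp.inner_apply, Fin.sum_univ_two, mul_comm]

lemma mk2_cos_sin_mem_sphere (t : ℝ) : mk2 (cos t) (sin t) ∈ sphere (0 : E²) 1 := by
  simp [EuclideanSpace.norm_eq, Fin.sum_univ_two]

lemma lipschitzWith_one_apply_zero : LipschitzWith 1 (fun x : E² => x 0) :=
  LipschitzWith.of_dist_le_mul fun x y => by
    simpa [dist_eq_norm] using PiLp.norm_apply_le (x - y) 0

lemma isometry_mk2_zero : Isometry (mk2 0) :=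
  Isometry.of_dist_eq fun a b => by
    simp [EuclideanSpace.dist_eq, Fin.sum_univ_two, Real.dist_eq, Real.sqrt_sq_eq_abs]

lemma vertSegment_eq_image : vertSegment = mk2 0 '' Icc 0 1 := by
  ext x
  constructor
  · rintro ⟨hx₀, hx₁⟩
    refine ⟨x 1, hx₁, ?_⟩
    ext i
    fin_cases i <;> simp [hx₀]
  · rintro ⟨y, hy, rfl⟩
    exact ⟨rfl, hy⟩

lemma zero_mem_vertSegment : (0 : E²) ∈ vertSegment := ⟨rfl, by simp⟩

lemma dimH_vertSegment : dimH vertSegment = 1 := by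
  rw [vertSegment_eq_image, isometry_mk2_zero.dimH_image,
    Real.dimH_of_nonempty_interior (by simp), Module.finrank_self, Nat.cast_one]

lemma abs_cos_lt_sin {t : ℝ} (ht : t ∈ Ioo (π / 4) (3 * π / 4)) : |cos t| < sin t := by
  have hsin : 0 < sin t :=
    sin_pos_of_pos_of_lt_pi (by linarith [ht.1, pi_pos]) (by linarith [ht.2, pi_pos])
  have hcos2 : cos (2 * t) < 0 :=
    cos_neg_of_pi_div_two_lt_of_lt (by linarith [ht.1]) (by linarith [ht.2])
  rw [← abs_of_pos hsin, ← sq_lt_sq]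
  nlinarith [cos_sq_add_sin_sq t, cos_two_mul t]

lemma eq_zero_of_oneNorm_sub_le {a b : ℝ} (hab : |a| < |b|) {x p : E²} (hx : x 0 = 0)
    (hp : ⟪mk2 a b, p⟫ = 0) (hle : oneNorm (x - p) ≤ oneNorm x) : p = 0 := by
  rw [inner_mk2] at hp
  have hb : b ≠ 0 := abs_pos.1 ((abs_nonneg a).trans_lt hab)
  have hslope : |b| * |p 1| = |a| * |p 0| := by
    rw [← abs_mul, ← abs_mul, show b * p 1 = -(a * p 0) by linarith, abs_neg]
  have hp₀ : p 0 = 0 := by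
    by_contra hne
    have hsteep : |p 1| < |p 0| := by
      refine lt_of_mul_lt_mul_left ?_ (abs_nonneg b)
      rw [hslope]
      exact mul_lt_mul_of_pos_right hab (abs_pos.2 hne)
    have hcost : oneNorm (x - p) = |p 0| + |x 1 - p 1| := by simp [oneNorm, hx]
    have hgain : oneNorm x = |x 1| := by simp [oneNorm, hx]
    have htri := abs_sub_abs_le_abs_sub (x 1) (p 1)
    rw [hcost, hgain] at hle
    linarith
  have hp₁ : p 1 = 0 := by
    rw [hp₀, mul_zero, zero_add] at hp
    exact (mul_eq_zero.1 hp).resolve_left hb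
  ext i
  fin_cases i
  · exact hp₀
  · exact hp₁

lemma image_vertSegment_eq_zero {a b : ℝ} (hab : |a| < |b|) {f : E² → E²}
    (hf : ∀ x, ⟪mk2 a b, f x⟫ = 0 ∧
      ∀ q, ⟪mk2 a b, q⟫ = 0 → oneNorm (x - f x) ≤ oneNorm (x - q)) :
    f '' vertSegment = {0} := by
  refine eq_singleton_iff_nonempty_unique_mem.2
    ⟨⟨_, mem_image_of_mem f zero_mem_vertSegment⟩, ?_⟩
  rintro _ ⟨x, hx, rfl⟩
  obtain ⟨hfx, hmin⟩ := hf x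
  exact eq_zero_of_oneNorm_sub_le hab hx.1 hfx (by simpa using hmin 0 (by simp))

lemma hausdorffMeasure_one_arc_pos {a b : ℝ} (ha : 0 ≤ a) (hab : a < b) (hb : b ≤ π) :
    0 < (μH[1] : Measure E²) ((fun t : ℝ => mk2 (cos t) (sin t)) '' Ioo a b) := by
  have hcos : Ioo (cos b) (cos a) ⊆
      (fun x : E² => x 0) '' ((fun t => mk2 (cos t) (sin t)) '' Ioo a b) := by
    rw [image_image]
    exact intermediate_value_Ioo' hab.le continuous_cos.continuousOn
  calc (0 : ℝ≥0∞) < (μH[1] : Measure ℝ) (Ioo (cos b) (cos a)) := by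
        rw [hausdorffMeasure_real, Real.volume_Ioo, ENNReal.ofReal_pos, sub_pos]
        exact cos_lt_cos_of_nonneg_of_le_pi ha hb hab
    _ ≤ μH[1] ((fun x : E² => x 0) '' ((fun t => mk2 (cos t) (sin t)) '' Ioo a b)) :=
        measure_mono hcos
    _ ≤ _ := by
        simpa using lipschitzWith_one_apply_zero.hausdorffMeasure_image_le zero_le_one
          ((fun t => mk2 (cos t) (sin t)) '' Ioo a b)

/-- for the norm `‖·‖₁` and the Borel set `A = {0} × [0,1]` (of
Hausdorff dimension `1`), for every `t ∈ (π/4, 3π/4)` the closest-point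
projection of `A` onto `H_{v(t)}` is the singleton `{(0,0)}`, hence of Hausdorff
dimension `0`; consequently the set of directions `v ∈ S¹` with
`dim(P_v(A)) < dim A` has positive `ℋ¹`-measure, so the Marstrand-type
conclusion `dim(P_v(A)) = dim A` for `ℋ¹`-a.e. `v ∈ S¹` fails for `‖·‖₁`. -/
theorem oneNorm_marstrand_fails
    -- `P t` is the closest-point projection (w.r.t. `‖·‖₁`) onto the line
    -- `H_{v(t)}`, for each angle `t ∈ (π/4, 3π/4)`:
    (P : ℝ → EuclideanSpace ℝ (Fin 2) → EuclideanSpace ℝ (Fin 2))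
    (hP : ∀ t ∈ Ioo (π / 4) (3 * π / 4), ∀ x : EuclideanSpace ℝ (Fin 2),
      ⟪mk2 (Real.cos t) (Real.sin t), P t x⟫ = 0 ∧
        ∀ q : EuclideanSpace ℝ (Fin 2), ⟪mk2 (Real.cos t) (Real.sin t), q⟫ = 0 →
          oneNorm (x - P t x) ≤ oneNorm (x - q)) :
    dimH vertSegment = 1 ∧
    (∀ t ∈ Ioo (π / 4) (3 * π / 4),
      P t '' vertSegment = {0} ∧ dimH (P t '' vertSegment) = 0) ∧
    0 < (μH[1] : Measure (EuclideanSpace ℝ (Fin 2)))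
        ((fun t : ℝ => mk2 (Real.cos t) (Real.sin t)) ''
          {t ∈ Ioo (π / 4) (3 * π / 4) |
            dimH (P t '' vertSegment) < dimH vertSegment}) ∧
    ¬ (∀ᵐ v ∂((μH[1] : Measure (EuclideanSpace ℝ (Fin 2))).restrict
          (sphere (0 : EuclideanSpace ℝ (Fin 2)) 1)),
        ∀ t ∈ Ioo (π / 4) (3 * π / 4), mk2 (Real.cos t) (Real.sin t) = v →
          dimH (P t '' vertSegment) = dimH vertSegment) := by
  have hproj : ∀ t ∈ Ioo (π / 4) (3 * π / 4), P t '' vertSegment = {0} := fun t ht =>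
    image_vertSegment_eq_zero ((abs_cos_lt_sin ht).trans_le (le_abs_self _)) (hP t ht)
  have hdrop : ∀ t ∈ Ioo (π / 4) (3 * π / 4), dimH (P t '' vertSegment) < dimH vertSegment :=
    fun t ht => by simp [hproj t ht, dimH_vertSegment]
  have harc := hausdorffMeasure_one_arc_pos (a := π / 4) (b := 3 * π / 4)
    (by positivity) (by linarith [pi_pos]) (by linarith [pi_pos])
  refine ⟨dimH_vertSegment, fun t ht => ⟨hproj t ht, by simp [hproj t ht]⟩,
    by rwa [sep_eq_self_iff_mem_true.2 hdrop], fun hae => harc.ne' ?_⟩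
  rw [← Measure.restrict_eq_self _
    ((image_subset_range _ _).trans (range_subset_iff.2 mk2_cos_sin_mem_sphere))]
  refine measure_mono_null ?_ (ae_iff.1 hae)
  rintro _ ⟨t, ht, rfl⟩ hall
  exact (hdrop t ht).ne (hall t ht rfl)
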